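/- For λ ∈ Γ_k with coordinates ordered λ₁ ≥ λ₂ ≥ ⋯ ≥ λₙ, the deleted symmetric functions are ordered oppositely: σ_{k-1}(λ|1) ≤ σ_{k-1}(λ|2) ≤ ⋯ ≤ σ_{k-1}(λ|n). -/

import Mathlib

/-- The k-th elementary symmetric polynomial of `x : Fin n → ℝ`. -/
def esym (n k : ℕ) (x : Fin n → ℝ) : ℝ :=
  ∑ t ∈ Finset.univ.powersetCard k, ∏ i ∈ t, x i

/-- σ_k(λ|i): the k-th elementary symmetric polynomial of `x` with the i-th entry removed. -/
def esymDel (n k : ℕ) (x : Fin n → ℝ) (i : Fin n) : ℝ :=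
  ∑ t ∈ (Finset.univ.erase i).powersetCard k, ∏ j ∈ t, x j

/-!
Since `σ_{k-1}(λ|i) - σ_{k-1}(λ|j) = (λ_j - λ_i) σ_{k-2}(λ|ij)`, it suffices that deleting an
entry maps `Γ_k` into `Γ_{k-1}`. Encode `λ` by `P(t) = ∏ (t + λ_j)`: the real-rooted polynomial
`P^{(n-k)}` has coefficients that are positive multiples of `σ_0, …, σ_k`, so `λ ∈ Γ_k` exactly
when all its roots are negative. Writing `P = (t + λ_i) Q` and `m = n - k`, one has
`P^{(m)} = (t + λ_i) Q^{(m)} + m Q^{(m-1)}`. If `Q^{(m)}` had a root `≥ 0`, then at its largest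
root `ρ` the left side would be positive, while the right side is `m Q^{(m-1)}(ρ) ≤ 0`, because a
real-rooted polynomial with positive leading coefficient is nonpositive at its largest critical
point (derivatives stay real-rooted by Rolle's theorem).
-/

open Polynomial

namespace Multiset

theorem sum_map_pos {ι R : Type*} [AddCommMonoid R] [PartialOrder R] [IsOrderedCancelAddMonoid R]
    {s : Multiset ι} {f : ι → R} (hs : s ≠ 0) (hf : ∀ i ∈ s, 0 < f i) : 0 < (s.map f).sum := by
  simpa using sum_lt_sum_of_nonempty (f := fun _ => (0 : R)) hs hf

variable {R : Type*} [CommSemiring R]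

theorem esymm_succ_cons (a : R) (s : Multiset R) (m : ℕ) :
    (a ::ₘ s).esymm (m + 1) = s.esymm (m + 1) + a * s.esymm m := by
  simp only [esymm, powersetCard_cons, map_add, sum_add, map_map, Function.comp_def, prod_cons,
    sum_map_mul_left]

theorem esymm_eq_zero_of_card_lt {s : Multiset R} {m : ℕ} (h : card s < m) : s.esymm m = 0 := by
  simp [esymm, powersetCard_eq_empty m h]

theorem esymm_pos [PartialOrder R] [IsStrictOrderedRing R] {s : Multiset R}
    (hs : ∀ a ∈ s, 0 < a) {m : ℕ} (hm : m ≤ card s) : 0 < s.esymm m := by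
  refine sum_map_pos ?_ fun t ht => prod_pos fun a ha => hs a ?_
  · simp [← card_eq_zero, card_powersetCard, (Nat.choose_pos hm).ne']
  · exact mem_of_le (mem_powersetCard.1 ht).1 ha

end Multiset

namespace Polynomial

theorem eval_pos_of_coeff_nonneg {R : Type*} [CommSemiring R] [PartialOrder R]
    [IsStrictOrderedRing R] {p : R[X]} (h0 : 0 < p.coeff 0) (h : ∀ j, 0 ≤ p.coeff j)
    {x : R} (hx : 0 ≤ x) : 0 < p.eval x := by
  rw [eval_eq_sum_range]
  exact Finset.sum_pos' (fun j _ => mul_nonneg (h j) (pow_nonneg hx j))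
    ⟨0, by simp, by simpa using h0⟩

theorem Splits.coeff_pos_of_roots_neg {p : ℝ[X]} (hp : p.Splits) (hlc : 0 < p.leadingCoeff)
    (hroots : ∀ r ∈ p.roots, r < 0) {j : ℕ} (hj : j ≤ p.natDegree) : 0 < p.coeff j := by
  rw [coeff_eq_esymm_roots_of_splits hp hj, mul_assoc, ← Multiset.esymm_neg]
  refine mul_pos hlc (Multiset.esymm_pos ?_ ?_)
  · intro a ha
    obtain ⟨r, hr, rfl⟩ := Multiset.mem_map.1 ha
    exact neg_pos.2 (hroots r hr)
  · rw [Multiset.card_map, ← hp.natDegree_eq_card_roots]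
    omega

theorem splits_derivative {p : ℝ[X]} (hp : p.Splits) : (derivative p).Splits := by
  rw [splits_iff_card_roots] at hp ⊢
  refine le_antisymm (card_roots' _) ?_
  have := card_roots_le_derivative p
  rw [natDegree_derivative]
  omega

theorem splits_iterate_derivative {p : ℝ[X]} (hp : p.Splits) (m : ℕ) :
    (derivative^[m] p).Splits := by
  induction m with
  | zero => exact hp
  | succ m ih => rw [Function.iterate_succ_apply']; exact splits_derivative ih

theorem natDegree_iterate_derivative_eq {R : Type*} [Semiring R] [IsAddTorsionFree R]
    (p : R[X]) (m : ℕ) : (derivative^[m] p).natDegree = p.natDegree - m := by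
  induction m with
  | zero => rfl
  | succ m ih => rw [Function.iterate_succ_apply', natDegree_derivative, ih, Nat.sub_sub]

theorem leadingCoeff_iterate_derivative_pos {p : ℝ[X]} (hp : 0 < p.leadingCoeff) {m : ℕ}
    (hm : m ≤ p.natDegree) : 0 < (derivative^[m] p).leadingCoeff := by
  induction m with
  | zero => exact hp
  | succ m ih =>
    rw [Function.iterate_succ_apply', leadingCoeff_derivative, natDegree_iterate_derivative_eq]
    exact mul_pos (ih (by omega)) (by exact_mod_cast Nat.sub_pos_of_lt hm)

theorem iterate_derivative_X_add_C_mul {R : Type*} [CommSemiring R] (a : R) (f : R[X]) :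
    ∀ m : ℕ, derivative^[m] ((X + C a) * f) =
      (X + C a) * derivative^[m] f + (m : R[X]) * derivative^[m - 1] f
  | 0 => by simp
  | m + 1 => by
    rw [Function.iterate_succ_apply', iterate_derivative_X_add_C_mul a f m]
    cases m <;> simp [derivative_mul, Function.iterate_succ_apply'] <;> ring

theorem Splits.eval_nonpos_of_roots_derivative_le {R : ℝ[X]} (hR : R.Splits)
    (hlc : 0 < R.leadingCoeff) {ρ : ℝ} (hρ : ρ ∈ (derivative R).roots)
    (hmax : ∀ r ∈ (derivative R).roots, r ≤ ρ) : R.eval ρ ≤ 0 := by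
  by_contra! hpos
  have hdeg : R.natDegree ≠ 0 := derivative_ne_zero.1 (ne_zero_of_mem_roots hρ)
  have hderiv_pos : ∀ x, ρ < x → 0 < (derivative R).eval x := by
    intro x hx
    rw [(splits_derivative hR).eval_eq_prod_roots, leadingCoeff_derivative]
    refine mul_pos (mul_pos hlc (by exact_mod_cast Nat.pos_of_ne_zero hdeg)) ?_
    refine Multiset.prod_pos fun y hy => ?_
    obtain ⟨r, hr, rfl⟩ := Multiset.mem_map.1 hy
    exact sub_pos.2 ((hmax r hr).trans_lt hx)
  have hmono : StrictMonoOn R.eval (Set.Ici ρ) :=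
    strictMonoOn_of_deriv_pos (convex_Ici ρ) R.continuousOn fun x hx => by
      rw [interior_Ici] at hx
      rw [Polynomial.deriv]
      exact hderiv_pos x hx
  have hroots : ∀ r ∈ R.roots, r < ρ := by
    intro r hr
    by_contra! h
    have := hmono.monotoneOn Set.self_mem_Ici h h
    rw [(mem_roots'.1 hr).2] at this
    linarith
  have hlog := hR.eval_derivative_eq_eval_mul_sum hpos.ne'
  rw [(mem_roots'.1 hρ).2] at hlog
  have hsum := Multiset.sum_map_pos (hR.roots_ne_zero hdeg) fun z hz =>
    one_div_pos.2 (sub_pos.2 (hroots z hz))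
  nlinarith

theorem natDegree_multiset_prod_X_add_C {R : Type*} [CommSemiring R] [Nontrivial R]
    (s : Multiset R) :
    (s.map fun r => X + C r).prod.natDegree = Multiset.card s := by
  rw [natDegree_multiset_prod_of_monic _ fun f hf => by
    obtain ⟨r, -, rfl⟩ := Multiset.mem_map.1 hf; exact monic_X_add_C r]
  simp [Multiset.map_map]

theorem monic_multiset_prod_X_add_C {R : Type*} [CommSemiring R] (s : Multiset R) :
    (s.map fun r => X + C r).prod.Monic :=
  monic_multiset_prod_of_monic _ _ fun r _ => monic_X_add_C r

theorem splits_multiset_prod_X_add_C {R : Type*} [CommSemiring R] (s : Multiset R) :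
    (s.map fun r => X + C r).prod.Splits :=
  Splits.multisetProd fun f hf => by
    obtain ⟨r, -, rfl⟩ := Multiset.mem_map.1 hf
    exact Splits.X_add_C r

theorem leadingCoeff_iterate_derivative_multiset_prod_X_add_C_pos (s : Multiset ℝ)
    {m : ℕ} (hm : m ≤ Multiset.card s) :
    0 < (derivative^[m] (s.map fun r => X + C r).prod).leadingCoeff := by
  refine leadingCoeff_iterate_derivative_pos ?_ (by rwa [natDegree_multiset_prod_X_add_C])
  rw [(monic_multiset_prod_X_add_C s).leadingCoeff]
  exact one_pos

end Polynomial

/-- `Γ_k` for multisets of reals; the condition at `j = 0` is vacuous as `esymm s 0 = 1`. -/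
def gardingCone (k : ℕ) : Set (Multiset ℝ) :=
  {s | ∀ j ≤ k, 0 < s.esymm j}

section gardingCone

open Multiset

variable {s : Multiset ℝ} {k : ℕ}

theorem coeff_prod_X_add_C_pos (hs : s ∈ gardingCone k) {i : ℕ} (hki : card s - k ≤ i)
    (hi : i ≤ card s) : 0 < (s.map fun r => X + C r).prod.coeff i := by
  rw [prod_X_add_C_coeff s hi]
  exact hs _ (by omega)

theorem eval_iterate_derivative_prod_X_add_C_pos (hs : s ∈ gardingCone k) {x : ℝ} (hx : 0 ≤ x) :
    0 < (derivative^[card s - k] (s.map fun r => X + C r).prod).eval x := by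
  refine eval_pos_of_coeff_nonneg ?_ (fun j => ?_) hx
  · rw [coeff_iterate_derivative, zero_add, nsmul_eq_mul]
    exact mul_pos (by exact_mod_cast (Nat.descFactorial_pos.2 le_rfl))
      (coeff_prod_X_add_C_pos hs le_rfl (by omega))
  · rw [coeff_iterate_derivative, nsmul_eq_mul]
    refine mul_nonneg (Nat.cast_nonneg _) ?_
    rcases le_or_gt (j + (card s - k)) (card s) with hj | hj
    · exact (coeff_prod_X_add_C_pos hs (by omega) hj).le
    · rw [coeff_eq_zero_of_natDegree_lt (by rwa [natDegree_multiset_prod_X_add_C])]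

theorem mem_gardingCone_of_roots_neg (hk : k ≤ card s)
    (hroots : ∀ r ∈ (derivative^[card s - k] (s.map fun r => X + C r).prod).roots, r < 0) :
    s ∈ gardingCone k := by
  intro j hj
  have hdeg : (derivative^[card s - k] (s.map fun r => X + C r).prod).natDegree = k := by
    rw [natDegree_iterate_derivative_eq, natDegree_multiset_prod_X_add_C]
    omega
  have hcoeff :=
    (splits_iterate_derivative (splits_multiset_prod_X_add_C s) _).coeff_pos_of_roots_neg
      (leadingCoeff_iterate_derivative_multiset_prod_X_add_C_pos s (by omega)) hroots
      (j := k - j) (by omega)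
  rw [coeff_iterate_derivative, nsmul_eq_mul, prod_X_add_C_coeff s (by omega),
    show card s - (k - j + (card s - k)) = j by omega] at hcoeff
  exact pos_of_mul_pos_right hcoeff (Nat.cast_nonneg _)

theorem mem_gardingCone_of_cons_mem {a : ℝ} {t : Multiset ℝ} (hs : a ::ₘ t ∈ gardingCone (k + 1)) :
    t ∈ gardingCone k := by
  obtain ⟨d, hd⟩ : ∃ d, card t = k + d := by
    refine Nat.exists_eq_add_of_le (Nat.le_of_succ_le_succ ?_)
    by_contra! h
    exact (hs _ le_rfl).ne' (esymm_eq_zero_of_card_lt (by simpa using h))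
  have hQ : ∀ x, 0 ≤ x →
      0 < (derivative^[d] ((X + C a) * (t.map fun r => X + C r).prod)).eval x := by
    intro x hx
    have := eval_iterate_derivative_prod_X_add_C_pos hs hx
    rwa [card_cons, hd, show k + d + 1 - (k + 1) = d by omega, map_cons, prod_cons] at this
  refine mem_gardingCone_of_roots_neg (by omega) fun r hr => ?_
  by_contra! hr0
  rw [hd, Nat.add_sub_cancel_left] at hr
  obtain ⟨ρ, hρ, hmax⟩ := exists_max_image id fun h => notMem_zero r (h ▸ hr)
  have hQρ := hQ ρ (hr0.trans (hmax r hr))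
  rw [iterate_derivative_X_add_C_mul, eval_add, eval_mul, (mem_roots'.1 hρ).2, mul_zero,
    zero_add, eval_mul, eval_natCast] at hQρ
  have : (d : ℝ) * (derivative^[d - 1] (t.map fun r => X + C r).prod).eval ρ ≤ 0 := by
    rcases d with _ | e
    · simp
    refine mul_nonpos_of_nonneg_of_nonpos (Nat.cast_nonneg _) ?_
    rw [Nat.add_sub_cancel]
    refine Splits.eval_nonpos_of_roots_derivative_le
      (splits_iterate_derivative (splits_multiset_prod_X_add_C t) e)
      (leadingCoeff_iterate_derivative_multiset_prod_X_add_C_pos t (by omega)) ?_ ?_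
    · rwa [← Function.iterate_succ_apply' derivative]
    · rwa [← Function.iterate_succ_apply' derivative]
  linarith

end gardingCone

theorem Finset.map_val_eq_cons_map_erase {ι α : Type*} [DecidableEq ι] (f : ι → α) {s : Finset ι}
    {j : ι} (hj : j ∈ s) : s.val.map f = f j ::ₘ (s.erase j).val.map f := by
  rw [Finset.erase_val, ← Multiset.map_cons, Multiset.cons_erase hj]

theorem esym_eq_esymm (n k : ℕ) (x : Fin n → ℝ) :
    esym n k x = (Finset.univ.val.map x).esymm k :=
  (Finset.esymm_map_val x _ k).symm

theorem esymDel_eq_esymm (n k : ℕ) (x : Fin n → ℝ) (i : Fin n) :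
    esymDel n k x i = ((Finset.univ.erase i).val.map x).esymm k :=
  (Finset.esymm_map_val x _ k).symm

theorem esymDel_monotone_of_gardingCone_general (n k : ℕ)
    (l : Fin n → ℝ)
    (hΓ : ∀ i : ℕ, 1 ≤ i → i ≤ k → 0 < esym n i l)
    (hmono : ∀ i j : Fin n, i ≤ j → l j ≤ l i) :
    ∀ i j : Fin n, i ≤ j → esymDel n (k - 1) l i ≤ esymDel n (k - 1) l j := by
  intro i j hij
  obtain rfl | hne := eq_or_ne i j
  · rfl
  obtain _ | _ | m := k
  · simp [esymDel]
  · simp [esymDel]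
  set U := ((Finset.univ.erase i).erase j).val.map l
  have hUi : (Finset.univ.erase i).val.map l = l j ::ₘ U :=
    Finset.map_val_eq_cons_map_erase l (Finset.mem_erase.2 ⟨hne.symm, Finset.mem_univ j⟩)
  have hUj : (Finset.univ.erase j).val.map l = l i ::ₘ U := by
    rw [Finset.map_val_eq_cons_map_erase l (Finset.mem_erase.2 ⟨hne, Finset.mem_univ i⟩),
      Finset.erase_right_comm]
  have hS : l i ::ₘ l j ::ₘ U ∈ gardingCone (m + 2) := by
    rintro (_ | p) hp
    · simp [Multiset.esymm]
    rw [← hUi, ← Finset.map_val_eq_cons_map_erase l (Finset.mem_univ i), ← esym_eq_esymm]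
    exact hΓ _ (by omega) hp
  have hU : U ∈ gardingCone m := mem_gardingCone_of_cons_mem (mem_gardingCone_of_cons_mem hS)
  rw [Nat.add_sub_cancel, esymDel_eq_esymm, esymDel_eq_esymm, hUi, hUj,
    Multiset.esymm_succ_cons, Multiset.esymm_succ_cons]
  gcongr
  · exact (hU m le_rfl).le
  · exact hmono i j hij

/-- For λ ∈ Γ_k with decreasing entries, σ_{k-1}(λ|1) ≤ σ_{k-1}(λ|2) ≤ ⋯ ≤ σ_{k-1}(λ|n). -/
theorem esymDel_monotone_of_gardingCone (n k : ℕ) (hk : 1 ≤ k) (hkn : k ≤ n)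
    (l : Fin n → ℝ)
    (hΓ : ∀ i : ℕ, 1 ≤ i → i ≤ k → 0 < esym n i l)
    (hmono : ∀ i j : Fin n, i ≤ j → l j ≤ l i) :
    ∀ i j : Fin n, i ≤ j → esymDel n (k - 1) l i ≤ esymDel n (k - 1) l j :=
  esymDel_monotone_of_gardingCone_general n k l hΓ hmono
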